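/- Let (a_i)_{i∈ℕ} be a summable sequence of nonnegative real numbers with Σ_i a_i = 2/3, and let (d_i)_{i∈ℕ} be a sequence of real numbers with 0 ≤ d_i ≤ M for some constant M. Then the ratio (Σ_i a_i · ∫₀^Λ p/(d_i + p² + p) dp) / log(1 + Λ) tends to 2/3 as Λ → ∞. -/

import Mathlib

/-!
For `0 ≤ d` the integrand `p / (d + p² + p)` lies between `(1 + p)⁻¹ - (1 + d) (1 + p)⁻²` and
`(1 + p)⁻¹`, so `∫₀^Λ p / (d + p² + p) dp` differs from `log (1 + Λ)` by at most `1 + d ≤ 1 + M`,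
uniformly in `i`. Hence `∑ aᵢ ∫₀^Λ … = (∑ aᵢ) log (1 + Λ) + O(1)`, and dividing by
`log (1 + Λ) → ∞` gives the limit `∑ aᵢ = 2/3`.
-/

open Filter Topology intervalIntegral MeasureTheory

lemma abs_tsum_mul_sub_tsum_mul_le {ι : Type*} {a I : ι → ℝ} {L C : ℝ} (ha : Summable a)
    (hI : ∀ i, |I i - L| ≤ C) :
    Summable (fun i => a i * I i) ∧ |∑' i, a i * I i - (∑' i, a i) * L| ≤ (∑' i, |a i|) * C := by
  have hbound : ∀ i, ‖a i * (I i - L)‖ ≤ |a i| * C := fun i => by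
    rw [norm_mul, Real.norm_eq_abs]
    exact mul_le_mul_of_nonneg_left (hI i) (abs_nonneg _)
  have herr : Summable (fun i => a i * (I i - L)) := (ha.abs.mul_right C).of_norm_bounded hbound
  have hsplit : (fun i => a i * I i) = fun i => a i * L + a i * (I i - L) := by
    ext i; ring
  refine ⟨hsplit ▸ (ha.mul_right L).add herr, ?_⟩
  rw [hsplit, (ha.mul_right L).tsum_add herr, tsum_mul_right, add_sub_cancel_left,
    ← tsum_mul_right]
  exact tsum_of_norm_bounded (ha.abs.mul_right C).hasSum hbound

lemma tendsto_tsum_mul_div_of_abs_sub_le {α ι : Type*} {l : Filter α} {a : ι → ℝ}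
    {I : ι → α → ℝ} {L : α → ℝ} {C : ℝ} (ha : Summable a)
    (hI : ∀ᶠ x in l, ∀ i, |I i x - L x| ≤ C) (hL : Tendsto L l atTop) :
    Tendsto (fun x => (∑' i, a i * I i x) / L x) l (𝓝 (∑' i, a i)) := by
  rw [tendsto_iff_norm_sub_tendsto_zero]
  refine squeeze_zero' (.of_forall fun _ => norm_nonneg _) ?_
    ((tendsto_const_nhds (x := (∑' i, |a i|) * C)).div_atTop hL)
  filter_upwards [hI, hL.eventually_gt_atTop 0] with x hx hLx
  rw [Real.norm_eq_abs, div_sub' hLx.ne', abs_div, abs_of_pos hLx, mul_comm (L x)]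
  exact div_le_div_of_nonneg_right (abs_tsum_mul_sub_tsum_mul_le ha hx).2 hLx.le

lemma div_add_sq_add_self_le_inv_one_add {d p : ℝ} (hd : 0 ≤ d) (hp : 0 ≤ p) :
    p / (d + p ^ 2 + p) ≤ (1 + p)⁻¹ := by
  rcases hp.eq_or_lt with rfl | hp
  · simp
  rw [div_le_iff₀ (by positivity), ← div_eq_inv_mul, le_div_iff₀ (by positivity)]
  nlinarith

lemma inv_one_add_sub_le_div_add_sq_add_self {d p : ℝ} (hd : 0 ≤ d) (hp : 0 ≤ p) :
    (1 + p)⁻¹ - (1 + d) * ((1 + p) ^ 2)⁻¹ ≤ p / (d + p ^ 2 + p) := by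
  have h : (1 + p)⁻¹ - (1 + d) * ((1 + p) ^ 2)⁻¹ = (p - d) / (1 + p) ^ 2 := by
    field_simp
    ring
  rcases hp.eq_or_lt with rfl | hp
  · simp [hd]
  rw [h, div_le_div_iff₀ (by positivity) (by positivity)]
  nlinarith [mul_nonneg hd hp.le, mul_nonneg hd (sq_nonneg p), sq_nonneg d]

-- For `d = 0` the integrand is discontinuous at `p = 0` (where `0 / 0 = 0`), so integrability
-- comes from domination by `1` rather than from continuity.
lemma intervalIntegrable_div_add_sq_add_self {d Λ : ℝ} (hd : 0 ≤ d) (hΛ : 0 ≤ Λ) :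
    IntervalIntegrable (fun p => p / (d + p ^ 2 + p)) volume 0 Λ := by
  refine (intervalIntegrable_const (c := (1 : ℝ))).mono_fun'
    (measurable_id.div (by fun_prop)).aestronglyMeasurable ?_
  filter_upwards [ae_restrict_mem measurableSet_uIoc] with p hp
  rw [Set.uIoc_of_le hΛ] at hp
  have hp0 : 0 ≤ p := hp.1.le
  rw [Real.norm_of_nonneg (by positivity)]
  exact (div_add_sq_add_self_le_inv_one_add hd hp0).trans (inv_le_one_of_one_le₀ (by linarith))

lemma one_add_ne_zero_of_mem_uIcc {Λ p : ℝ} (hΛ : 0 ≤ Λ) (hp : p ∈ Set.uIcc 0 Λ) :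
    1 + p ≠ 0 := by
  rw [Set.uIcc_of_le hΛ] at hp
  linarith [hp.1]

lemma integral_inv_one_add {Λ : ℝ} (hΛ : 0 ≤ Λ) :
    ∫ p in (0 : ℝ)..Λ, (1 + p)⁻¹ = Real.log (1 + Λ) := by
  rw [integral_comp_add_left (fun x => x⁻¹), add_zero, integral_inv_of_pos one_pos (by linarith),
    div_one]

lemma integral_inv_sq_one_add {Λ : ℝ} (hΛ : 0 ≤ Λ) :
    ∫ p in (0 : ℝ)..Λ, ((1 + p) ^ 2)⁻¹ = 1 - (1 + Λ)⁻¹ := by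
  rw [integral_eq_sub_of_hasDerivAt (f := fun p => -(1 + p)⁻¹), add_zero, inv_one]
  · ring
  · intro p hp
    simpa [neg_div, one_div] using
      (((hasDerivAt_id p).const_add 1).fun_inv (one_add_ne_zero_of_mem_uIcc hΛ hp)).fun_neg
  · exact intervalIntegrable_inv (fun p hp => pow_ne_zero 2 (one_add_ne_zero_of_mem_uIcc hΛ hp))
      (by fun_prop)

lemma abs_integral_div_add_sq_add_self_sub_log_le {d Λ : ℝ} (hd : 0 ≤ d) (hΛ : 0 ≤ Λ) :
    |(∫ p in (0 : ℝ)..Λ, p / (d + p ^ 2 + p)) - Real.log (1 + Λ)| ≤ 1 + d := by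
  have hinv : IntervalIntegrable (fun p : ℝ => (1 + p)⁻¹) volume 0 Λ :=
    intervalIntegrable_inv (fun _ hp => one_add_ne_zero_of_mem_uIcc hΛ hp) (by fun_prop)
  have hinv_sq : IntervalIntegrable (fun p : ℝ => (1 + d) * ((1 + p) ^ 2)⁻¹) volume 0 Λ :=
    (intervalIntegrable_inv (fun _ hp => pow_ne_zero 2 (one_add_ne_zero_of_mem_uIcc hΛ hp))
      (by fun_prop)).const_mul _
  have hf := intervalIntegrable_div_add_sq_add_self hd hΛ
  have upper : (∫ p in (0 : ℝ)..Λ, p / (d + p ^ 2 + p)) ≤ Real.log (1 + Λ) := by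
    rw [← integral_inv_one_add hΛ]
    exact integral_mono_on hΛ hf hinv fun p hp => div_add_sq_add_self_le_inv_one_add hd hp.1
  have lower : Real.log (1 + Λ) - (1 + d) * (1 - (1 + Λ)⁻¹) ≤
      ∫ p in (0 : ℝ)..Λ, p / (d + p ^ 2 + p) := by
    rw [← integral_inv_one_add hΛ, ← integral_inv_sq_one_add hΛ,
      ← intervalIntegral.integral_const_mul, ← integral_sub hinv hinv_sq]
    exact integral_mono_on hΛ (hinv.sub hinv_sq) hf
      fun p hp => inv_one_add_sub_le_div_add_sq_add_self hd hp.1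
  have hΛ_inv : 0 ≤ (1 + d) * (1 + Λ)⁻¹ := by positivity
  rw [abs_sub_le_iff]
  constructor <;> linarith

theorem tsum_integral_div_log_tendsto_general (a d : ℕ → ℝ) (M : ℝ)
    (hsum : Summable a) (htot : ∑' i, a i = 2 / 3)
    (hd0 : ∀ i, 0 ≤ d i) (hdM : ∀ i, d i ≤ M) :
    Tendsto (fun Λ : ℝ =>
        (∑' i, a i * ∫ p in (0 : ℝ)..Λ, p / (d i + p ^ 2 + p)) / Real.log (1 + Λ))
      atTop (nhds (2 / 3)) := by
  rw [← htot]
  refine tendsto_tsum_mul_div_of_abs_sub_le (C := 1 + M) hsum ?_ ?_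
  · filter_upwards [eventually_ge_atTop 0] with Λ hΛ i
    exact (abs_integral_div_add_sq_add_self_sub_log_le (hd0 i) hΛ).trans (by linarith [hdM i])
  · exact Real.tendsto_log_atTop.comp (tendsto_atTop_add_const_left _ 1 tendsto_id)

/-- If `(a i)` are nonnegative, summable with sum `2/3`, and `0 ≤ d i ≤ M`, then
`(Σ_i a_i ∫₀^Λ p/(d_i + p² + p) dp) / log(1 + Λ) → 2/3` as `Λ → ∞`. This is the
analytic content of `(8π/3) log(1+Λ)/F(Λ) → 1` for the radiative-correction
function `F`. -/
theorem tsum_integral_div_log_tendsto (a d : ℕ → ℝ) (M : ℝ)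
    (ha : ∀ i, 0 ≤ a i) (hsum : Summable a) (htot : ∑' i, a i = 2 / 3)
    (hd0 : ∀ i, 0 ≤ d i) (hdM : ∀ i, d i ≤ M) :
    Tendsto (fun Λ : ℝ =>
        (∑' i, a i * ∫ p in (0 : ℝ)..Λ, p / (d i + p ^ 2 + p)) / Real.log (1 + Λ))
      atTop (nhds (2 / 3)) :=
  tsum_integral_div_log_tendsto_general a d M hsum htot hd0 hdM
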